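/- Let x = diag(λ₁, λ₂, λ₃) be a diagonal 3×3 complex matrix with λ₁λ₂λ₃ = 1 and each |λ_i| = 1, let μ₁, μ₂, μ₃ be complex numbers, let P = (p_{ij}) be a matrix in SU(2,1), and let y = P·diag(μ₁, μ₂, μ₃)·P⁻¹. Let P̂ be the real 3×3 matrix with entries P̂_{ij} = ε_{ij}·|p_{ij}|², where ε_{ij} = −1 if exactly one of i, j equals 3 and ε_{ij} = +1 otherwise. Then tr(xy) = Σ_{i,j} λ_i · P̂_{ij} · μ_j and tr(x⁻¹y) = Σ_{i,j} λ_i⁻¹ · P̂_{ij} · μ_j. -/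

import Mathlib

open Matrix

/-- The matrix of the Hermitian form of signature (2,1) on ℂ³. -/
def formJ : Matrix (Fin 3) (Fin 3) ℂ := Matrix.diagonal ![1, 1, -1]

/-- A matrix belongs to SU(2,1) iff it has determinant 1 and preserves the form `formJ`. -/
def SU21 (A : Matrix (Fin 3) (Fin 3) ℂ) : Prop :=
  A.det = 1 ∧ Aᴴ * formJ * A = formJ

/-- The sign `ε i j`, equal to `-1` when exactly one of `i`, `j` is the last index
and `+1` otherwise. -/
def eps (i j : Fin 3) : ℝ := if (i = 2 ↔ j = 2) then 1 else -1

/-! If `P` preserves the form `J` then `P⁻¹ = J Pᴴ J`, so that `(P⁻¹)ⱼᵢ = εᵢⱼ · conj pᵢⱼ`.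
Hence `tr (diag l · P diag μ P⁻¹) = Σᵢⱼ lᵢ pᵢⱼ μⱼ εᵢⱼ conj pᵢⱼ = Σᵢⱼ lᵢ P̂ᵢⱼ μⱼ`; this is applied
with `l = λ` and, since `|λᵢ| = 1` makes `x` invertible, with `l = λ⁻¹`. -/

theorem Matrix.inv_eq_of_conjTranspose_mul_mul_eq {n R : Type*} [Fintype n] [DecidableEq n]
    [CommRing R] [Star R] {J P : Matrix n n R} (hJ : J * J = 1) (hP : Pᴴ * J * P = J) :
    P⁻¹ = J * Pᴴ * J :=
  inv_eq_left_inv <| by simp only [Matrix.mul_assoc]; rw [← Matrix.mul_assoc Pᴴ, hP, hJ]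

theorem Matrix.inv_diagonal_of_ne_zero {n K : Type*} [Fintype n] [DecidableEq n] [Field K]
    {v : n → K} (hv : ∀ i, v i ≠ 0) : (diagonal v)⁻¹ = diagonal v⁻¹ :=
  inv_eq_left_inv <| by
    rw [diagonal_mul_diagonal, ← diagonal_one]
    exact congrArg diagonal (funext fun i => inv_mul_cancel₀ (hv i))

theorem Matrix.trace_diagonal_mul_mul_diagonal_mul {n R : Type*} [Fintype n] [DecidableEq n]
    [Semiring R] (l m : n → R) (A B : Matrix n n R) :
    (diagonal l * (A * diagonal m * B)).trace = ∑ i, ∑ j, l i * A i j * m j * B j i := by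
  simp only [trace, diag, diagonal_mul, mul_apply (M := A * diagonal m), mul_diagonal]
  simp only [Finset.mul_sum, mul_assoc]

theorem formJ_mul_formJ : formJ * formJ = 1 := by
  rw [formJ, diagonal_mul_diagonal, ← diagonal_one]
  congr 1
  ext i
  fin_cases i <;> simp

theorem formJ_mul_conjTranspose_mul_formJ_apply (P : Matrix (Fin 3) (Fin 3) ℂ) (i j : Fin 3) :
    (formJ * Pᴴ * formJ) j i = (eps i j : ℂ) * star (P i j) := by
  fin_cases i <;> fin_cases j <;> simp [formJ, eps, diagonal_mul, mul_diagonal]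

theorem trace_diagonal_mul_conj_eq_sum_eps_normSq (l mu : Fin 3 → ℂ) {P : Matrix (Fin 3) (Fin 3) ℂ}
    (hP : Pᴴ * formJ * P = formJ) :
    (diagonal l * (P * diagonal mu * P⁻¹)).trace =
      ∑ i, ∑ j, l i * ((eps i j * Complex.normSq (P i j) : ℝ) : ℂ) * mu j := by
  rw [Matrix.inv_eq_of_conjTranspose_mul_mul_eq formJ_mul_formJ hP,
    Matrix.trace_diagonal_mul_mul_diagonal_mul]
  refine Finset.sum_congr rfl fun i _ => Finset.sum_congr rfl fun j _ => ?_
  rw [formJ_mul_conjTranspose_mul_formJ_apply, Complex.ofReal_mul, Complex.normSq_eq_conj_mul_self,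
    Complex.star_def]
  ring

theorem trace_xy_via_Phat_general (lam mu : Fin 3 → ℂ)
    (hlam : ∀ i, ‖lam i‖ = 1)
    (P : Matrix (Fin 3) (Fin 3) ℂ) (hP : SU21 P)
    (x y : Matrix (Fin 3) (Fin 3) ℂ)
    (hx : x = Matrix.diagonal lam)
    (hy : y = P * Matrix.diagonal mu * P⁻¹) :
    (x * y).trace =
      ∑ i : Fin 3, ∑ j : Fin 3, lam i * ((eps i j * Complex.normSq (P i j) : ℝ) : ℂ) * mu j ∧
    (x⁻¹ * y).trace =
      ∑ i : Fin 3, ∑ j : Fin 3, (lam i)⁻¹ * ((eps i j * Complex.normSq (P i j) : ℝ) : ℂ) * mu j := by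
  have hlam0 : ∀ i, lam i ≠ 0 := fun i => norm_ne_zero_iff.mp (by simp [hlam i])
  subst hx hy
  rw [Matrix.inv_diagonal_of_ne_zero hlam0]
  exact ⟨trace_diagonal_mul_conj_eq_sum_eps_normSq lam mu hP.2,
    trace_diagonal_mul_conj_eq_sum_eps_normSq lam⁻¹ mu hP.2⟩

theorem trace_xy_via_Phat (lam mu : Fin 3 → ℂ)
    (hlam1 : lam 0 * lam 1 * lam 2 = 1) (hlam : ∀ i, ‖lam i‖ = 1)
    (P : Matrix (Fin 3) (Fin 3) ℂ) (hP : SU21 P)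
    (x y : Matrix (Fin 3) (Fin 3) ℂ)
    (hx : x = Matrix.diagonal lam)
    (hy : y = P * Matrix.diagonal mu * P⁻¹) :
    (x * y).trace =
      ∑ i : Fin 3, ∑ j : Fin 3, lam i * ((eps i j * Complex.normSq (P i j) : ℝ) : ℂ) * mu j ∧
    (x⁻¹ * y).trace =
      ∑ i : Fin 3, ∑ j : Fin 3, (lam i)⁻¹ * ((eps i j * Complex.normSq (P i j) : ℝ) : ℂ) * mu j :=
  trace_xy_via_Phat_general lam mu hlam P hP x y hx hy
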